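/- arXiv:2301.03229 — 4 statements merged into one kernel-verified Lean document; each statement's English description precedes it below -/
import Mathlib

section
/- For all but countably many pairs (θ₁, θ₂) in (0,π)×(0,π) and for fixed nonnegative integers k₁, k₂ ∈ {0,1,2}, the limit as T,S → ∞ of (1/(T^{k₁+1} S^{k₂+1})) Σ_{t=1}^{T} Σ_{s=1}^{S} t^{k₁} s^{k₂} cos²(θ₁ t + θ₂ s) equals 1/(2(k₁+1)(k₂+1)). -/
/-!
Since `cos² x = (1 + cos 2x) / 2`, the normalised double sum is half the product of the
normalised power sums `(∑_{t ≤ T} t^k) / T^(k+1)`, which tend to `1 / (k + 1)` by comparison with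
`∫ x^k`, plus half the real part of a product of twisted sums `(∑_{t ≤ T} t^k z^t) / T^(k+1)`
with `z = e^{2iθ}`. When `sin θ ≠ 0` we have `z ≠ 1`, so the partial sums of `z^t` are bounded
and Abel summation gives `∑_{t ≤ T} t^k z^t = O(T^k)`: the oscillating part vanishes in the
limit. In particular the exceptional set can be taken empty.
-/

open Filter Real Topology Finset

theorem sum_Icc_one_eq_sum_range {M : Type*} [AddCommMonoid M] (f : ℕ → M) (n : ℕ) :
    ∑ t ∈ Icc 1 n, f t = ∑ i ∈ range n, f (i + 1) := by
  rw [← Finset.Ico_add_one_right_eq_Icc, Finset.sum_Ico_eq_sum_range]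
  simp [add_comm]

theorem pow_succ_div_le_sum_Icc_pow (k n : ℕ) :
    (n : ℝ) ^ (k + 1) / (k + 1) ≤ ∑ t ∈ Icc 1 n, (t : ℝ) ^ k := by
  have h := MonotoneOn.integral_le_sum (f := fun x : ℝ => x ^ k) (x₀ := 0) (a := n)
    ((pow_left_monotoneOn (n := k)).mono (by simp +contextual [Set.subset_def]))
  simpa [integral_pow, sum_Icc_one_eq_sum_range] using h

theorem sum_Icc_pow_le (k n : ℕ) :
    ∑ t ∈ Icc 1 n, (t : ℝ) ^ k ≤ ((n : ℝ) + 1) ^ (k + 1) / (k + 1) := by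
  have h := MonotoneOn.sum_le_integral (f := fun x : ℝ => x ^ k) (x₀ := 1) (a := n)
    ((pow_left_monotoneOn (n := k)).mono (by simp +contextual [Set.subset_def]; intros; linarith))
  rw [sum_Icc_one_eq_sum_range]
  calc ∑ i ∈ range n, ((i + 1 : ℕ) : ℝ) ^ k = ∑ i ∈ range n, (1 + (i : ℝ)) ^ k := by
        push_cast; simp_rw [add_comm]
    _ ≤ _ := h
    _ ≤ _ := by
        rw [integral_pow, add_comm (1 : ℝ)]
        gcongr
        simp

theorem norm_geom_sum_le {𝕜 : Type*} [NormedDivisionRing 𝕜] {z : 𝕜} (hz : ‖z‖ ≤ 1) (hz1 : z ≠ 1)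
    (m : ℕ) : ‖∑ i ∈ range m, z ^ i‖ ≤ 2 / ‖z - 1‖ := by
  rw [geom_sum_eq hz1, norm_div]
  gcongr
  calc ‖z ^ m - 1‖ ≤ ‖z ^ m‖ + ‖(1 : 𝕜)‖ := norm_sub_le _ _
    _ ≤ 1 + 1 := by gcongr; rw [norm_pow]; exact pow_le_one₀ (norm_nonneg _) hz; simp
    _ = 2 := by norm_num

theorem norm_sum_range_succ_smul_le_of_monotone {E : Type*} [NormedAddCommGroup E]
    [NormedSpace ℝ E] {f : ℕ → ℝ} {g : ℕ → E} {B : ℝ} (hf : Monotone f) (hf0 : 0 ≤ f 0)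
    (hg : ∀ m, ‖∑ i ∈ range m, g i‖ ≤ B) (n : ℕ) :
    ‖∑ i ∈ range (n + 1), f i • g i‖ ≤ 2 * B * f n := by
  have hfn : 0 ≤ f n := hf0.trans (hf n.zero_le)
  rw [sum_range_by_parts, Nat.add_sub_cancel]
  calc _ ≤ ‖f n • ∑ i ∈ range (n + 1), g i‖
        + ‖∑ i ∈ range n, (f (i + 1) - f i) • ∑ j ∈ range (i + 1), g j‖ := norm_sub_le _ _
    _ ≤ f n * B + ∑ i ∈ range n, (f (i + 1) - f i) * B := by
        gcongr
        · rw [norm_smul, Real.norm_of_nonneg hfn]; gcongr; exact hg _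
        · refine (norm_sum_le _ _).trans (sum_le_sum fun i _ => ?_)
          rw [norm_smul, Real.norm_of_nonneg (sub_nonneg.2 (hf i.le_succ))]
          gcongr
          · exact sub_nonneg.2 (hf i.le_succ)
          · exact hg _
    _ = (2 * f n - f 0) * B := by rw [← sum_mul, sum_range_sub]; ring
    _ ≤ 2 * B * f n := by nlinarith [(norm_nonneg _).trans (hg 0)]

theorem tendsto_sum_Icc_pow_div_pow (k : ℕ) :
    Tendsto (fun n : ℕ => (∑ t ∈ Icc 1 n, (t : ℝ) ^ k) / (n : ℝ) ^ (k + 1)) atTop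
      (𝓝 (1 / (k + 1))) := by
  have hupper : Tendsto (fun n : ℕ => (1 + 1 / (n : ℝ)) ^ (k + 1) / (k + 1)) atTop
      (𝓝 (1 / (k + 1))) := by
    simpa using ((tendsto_one_div_atTop_nhds_zero_nat.const_add 1).pow (k + 1)).div_const
      ((k : ℝ) + 1)
  refine tendsto_of_tendsto_of_tendsto_of_le_of_le' tendsto_const_nhds hupper ?_ ?_
  all_goals filter_upwards [eventually_gt_atTop 0] with n hn0
  all_goals have hn : (0 : ℝ) < n := by exact_mod_cast hn0
  · rw [le_div_iff₀ (by positivity), div_mul_eq_mul_div, one_mul]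
    exact pow_succ_div_le_sum_Icc_pow k n
  · rw [div_le_iff₀ (by positivity), one_add_div hn.ne', div_pow, div_mul_eq_mul_div,
      div_mul_cancel₀ _ (by positivity)]
    exact sum_Icc_pow_le k n

theorem norm_sum_Icc_natCast_pow_mul_pow_le {z : ℂ} (hz : ‖z‖ ≤ 1) (hz1 : z ≠ 1) (k n : ℕ) :
    ‖∑ t ∈ Icc 1 n, (t : ℂ) ^ k * z ^ t‖ ≤ 4 / ‖z - 1‖ * (n : ℝ) ^ k := by
  cases n with
  | zero => simp; positivity
  | succ n =>
    have hg (m : ℕ) : ‖∑ i ∈ range m, z ^ (i + 1)‖ ≤ 2 / ‖z - 1‖ := by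
      simp_rw [pow_succ, ← sum_mul, norm_mul]
      exact mul_le_of_le_one_right (norm_nonneg _) hz |>.trans (norm_geom_sum_le hz hz1 m)
    have h := norm_sum_range_succ_smul_le_of_monotone (f := fun i : ℕ => ((i : ℝ) + 1) ^ k)
      (fun i j hij => by dsimp only; gcongr) (by positivity) hg n
    simp only [Complex.real_smul, Complex.ofReal_pow, Complex.ofReal_add, Complex.ofReal_natCast,
      Complex.ofReal_one] at h
    rw [sum_Icc_one_eq_sum_range]
    push_cast
    exact h.trans_eq (by ring)

theorem tendsto_sum_Icc_natCast_pow_mul_pow_div_pow {z : ℂ} (hz : ‖z‖ ≤ 1) (hz1 : z ≠ 1)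
    (k : ℕ) :
    Tendsto (fun n : ℕ => (∑ t ∈ Icc 1 n, (t : ℂ) ^ k * z ^ t) / (n : ℂ) ^ (k + 1)) atTop
      (𝓝 0) := by
  refine squeeze_zero_norm' ?_
    ((tendsto_one_div_atTop_nhds_zero_nat.const_mul (4 / ‖z - 1‖)).trans_eq (by rw [mul_zero]))
  filter_upwards [eventually_gt_atTop 0] with n hn0
  have hn : (0 : ℝ) < n := by exact_mod_cast hn0
  rw [norm_div, norm_pow, Complex.norm_natCast, div_le_iff₀ (by positivity), pow_succ]
  exact (norm_sum_Icc_natCast_pow_mul_pow_le hz hz1 k n).trans_eq (by field_simp)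

theorem Complex.exp_two_mul_I_ne_one {θ : ℝ} (h : Real.sin θ ≠ 0) :
    Complex.exp (↑(2 * θ) * Complex.I) ≠ 1 := by
  rw [Ne, Complex.exp_eq_one_iff]
  rintro ⟨n, hn⟩
  refine h (Real.sin_eq_zero_iff.2 ⟨n, ?_⟩)
  have : ((2 * θ : ℝ) : ℂ) = ((2 * (n * π) : ℝ) : ℂ) := by
    apply mul_right_cancel₀ Complex.I_ne_zero
    rw [hn]; push_cast; ring
  have := Complex.ofReal_injective this
  linarith

theorem cos_sq_mul_add_mul (θ₁ θ₂ : ℝ) (t s : ℕ) :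
    cos (θ₁ * t + θ₂ * s) ^ 2 =
      1 / 2 + 1 / 2 * (Complex.exp (↑(2 * θ₁) * Complex.I) ^ t *
        Complex.exp (↑(2 * θ₂) * Complex.I) ^ s).re := by
  rw [← Complex.exp_nat_mul, ← Complex.exp_nat_mul, ← Complex.exp_add]
  have : (t : ℂ) * (↑(2 * θ₁) * Complex.I) + s * (↑(2 * θ₂) * Complex.I)
      = ↑(2 * (θ₁ * t + θ₂ * s)) * Complex.I := by
    push_cast; ring
  rw [this, Complex.exp_ofReal_mul_I_re, cos_sq]
  ring

theorem sum_sum_mul_cos_sq_eq (I J : Finset ℕ) (u v : ℕ → ℝ) (θ₁ θ₂ : ℝ) :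
    ∑ i ∈ I, ∑ j ∈ J, u i * v j * cos (θ₁ * i + θ₂ * j) ^ 2 =
      1 / 2 * ((∑ i ∈ I, u i) * ∑ j ∈ J, v j) +
        1 / 2 * ((∑ i ∈ I, (u i : ℂ) * Complex.exp (↑(2 * θ₁) * Complex.I) ^ i) *
          ∑ j ∈ J, (v j : ℂ) * Complex.exp (↑(2 * θ₂) * Complex.I) ^ j).re := by
  simp_rw [cos_sq_mul_add_mul, sum_mul_sum, Complex.re_sum, mul_sum, ← sum_add_distrib]
  refine sum_congr rfl fun i _ => sum_congr rfl fun j _ => ?_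
  set z₁ := Complex.exp (↑(2 * θ₁) * Complex.I)
  set z₂ := Complex.exp (↑(2 * θ₂) * Complex.I)
  rw [show (u i : ℂ) * z₁ ^ i * ((v j : ℂ) * z₂ ^ j) = ((u i * v j : ℝ) : ℂ) * (z₁ ^ i * z₂ ^ j)
    by push_cast; ring, Complex.re_ofReal_mul]
  ring

theorem tendsto_sum_sum_pow_mul_cos_sq {θ₁ θ₂ : ℝ} (h₁ : Real.sin θ₁ ≠ 0)
    (h₂ : Real.sin θ₂ ≠ 0) (k₁ k₂ : ℕ) :
    Tendsto
      (fun TS : ℕ × ℕ =>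
        (1 / ((TS.1 : ℝ) ^ (k₁ + 1) * (TS.2 : ℝ) ^ (k₂ + 1))) *
          ∑ t ∈ Icc 1 TS.1, ∑ s ∈ Icc 1 TS.2,
            (t : ℝ) ^ k₁ * (s : ℝ) ^ k₂ * (cos (θ₁ * t + θ₂ * s) ^ 2))
      (atTop ×ˢ atTop) (𝓝 (1 / (2 * (k₁ + 1) * (k₂ + 1)))) := by
  set z₁ := Complex.exp (↑(2 * θ₁) * Complex.I)
  set z₂ := Complex.exp (↑(2 * θ₂) * Complex.I)
  have hz₁ : ‖z₁‖ ≤ 1 := (Complex.norm_exp_ofReal_mul_I _).le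
  have hz₂ : ‖z₂‖ ≤ 1 := (Complex.norm_exp_ofReal_mul_I _).le
  have hmain := ((tendsto_sum_Icc_pow_div_pow k₁).comp tendsto_fst).mul
    ((tendsto_sum_Icc_pow_div_pow k₂).comp tendsto_snd)
  have herr := Complex.continuous_re.continuousAt.tendsto.comp <|
    ((tendsto_sum_Icc_natCast_pow_mul_pow_div_pow hz₁ (Complex.exp_two_mul_I_ne_one h₁) k₁).comp
      tendsto_fst).mul
    ((tendsto_sum_Icc_natCast_pow_mul_pow_div_pow hz₂ (Complex.exp_two_mul_I_ne_one h₂) k₂).comp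
      tendsto_snd)
  have hlim : 1 / 2 * (1 / ((k₁ : ℝ) + 1) * (1 / ((k₂ : ℝ) + 1))) + 1 / 2 * (0 * 0 : ℂ).re
      = 1 / (2 * (k₁ + 1) * (k₂ + 1)) := by
    simp only [mul_zero, Complex.zero_re, add_zero]; field_simp
  rw [← hlim]
  refine Tendsto.congr (fun TS => ?_) ((hmain.const_mul (1 / 2)).add (herr.const_mul (1 / 2)))
  obtain ⟨T, S⟩ := TS
  simp only [Function.comp_apply, sum_sum_mul_cos_sq_eq, Complex.ofReal_pow,
    Complex.ofReal_natCast]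
  set P := ∑ t ∈ Icc 1 T, (t : ℂ) ^ k₁ * z₁ ^ t
  set Q := ∑ s ∈ Icc 1 S, (s : ℂ) ^ k₂ * z₂ ^ s
  rw [show P / (T : ℂ) ^ (k₁ + 1) * (Q / (S : ℂ) ^ (k₂ + 1))
      = ((1 / ((T : ℝ) ^ (k₁ + 1) * (S : ℝ) ^ (k₂ + 1)) : ℝ) : ℂ) * (P * Q) by push_cast; ring,
    Complex.re_ofReal_mul]
  ring

/-- Vinogradov-type averaging lemma for the 2-D sinusoidal model: for all but
countably many frequency pairs `(θ₁, θ₂)` in `(0,π) × (0,π)` and for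
`k₁, k₂ ∈ {0,1,2}`, the normalized double sum converges as `T, S → ∞`. -/
theorem stmt_0 :
    ∃ C : Set (ℝ × ℝ), C.Countable ∧
      ∀ θ₁ θ₂ : ℝ, θ₁ ∈ Set.Ioo 0 π → θ₂ ∈ Set.Ioo 0 π → (θ₁, θ₂) ∉ C →
        ∀ k₁ k₂ : ℕ, k₁ ∈ ({0, 1, 2} : Set ℕ) → k₂ ∈ ({0, 1, 2} : Set ℕ) →
          Tendsto
            (fun TS : ℕ × ℕ =>
              (1 / ((TS.1 : ℝ) ^ (k₁ + 1) * (TS.2 : ℝ) ^ (k₂ + 1))) *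
                ∑ t ∈ Finset.Icc 1 TS.1, ∑ s ∈ Finset.Icc 1 TS.2,
                  (t : ℝ) ^ k₁ * (s : ℝ) ^ k₂ * (Real.cos (θ₁ * t + θ₂ * s) ^ 2))
            (atTop ×ˢ atTop)
            (𝓝 (1 / (2 * (k₁ + 1) * (k₂ + 1)))) := by
  refine ⟨∅, Set.countable_empty, fun θ₁ θ₂ hθ₁ hθ₂ _ k₁ k₂ _ _ => ?_⟩
  exact tendsto_sum_sum_pow_mul_cos_sq (sin_pos_of_pos_of_lt_pi hθ₁.1 hθ₁.2).ne'
    (sin_pos_of_pos_of_lt_pi hθ₂.1 hθ₂.2).ne' k₁ k₂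
end

section
/- Let ε be a real random variable with distribution function G satisfying G(0) = 1/2, and let h > 0 be a real constant. Then E[|h + ε| − |ε|] = 2∫_{−h}^{0} (h + x) dG(x), and in particular this expectation is nonnegative and bounded above by 2h. -/
open MeasureTheory Set

/-! The function `x ↦ |h + x| - |x|` equals `-h` left of `-h`, `h` right of `0`, and `h + 2x` in
between; that is, `h (𝟙_{x > 0} - 𝟙_{x ≤ 0}) + 2 (h + x) 𝟙_{-h < x ≤ 0}`. Integrating, the first
term contributes `h (P(ε > 0) - P(ε ≤ 0))`, which vanishes because `0` is a median, and the second
lies between `0` and `2h P(-h < ε ≤ 0)`. -/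

lemma abs_add_sub_abs_eq_indicator {h : ℝ} (hh : 0 ≤ h) (x : ℝ) :
    |h + x| - |x| = 2 * (Ioc (-h) 0).indicator (fun y => h + y) x
      + ((Ioi 0).indicator (fun _ => h) x - (Iic 0).indicator (fun _ => h) x) := by
  rcases lt_or_ge 0 x with hpos | hnonpos
  · have hx : x ∉ Ioc (-h) 0 := fun hx => hx.2.not_gt hpos
    have hx' : x ∉ Iic 0 := not_le.2 hpos
    rw [indicator_of_notMem hx, indicator_of_mem (show x ∈ Ioi 0 from hpos),
      indicator_of_notMem hx', abs_of_pos hpos, abs_of_pos (by linarith)]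
    ring
  rcases le_or_gt x (-h) with hle | hgt
  · have hx : x ∉ Ioc (-h) 0 := fun hx => hx.1.not_ge hle
    have hx' : x ∉ Ioi 0 := not_lt.2 hnonpos
    rw [indicator_of_notMem hx, indicator_of_notMem hx',
      indicator_of_mem (show x ∈ Iic 0 from hnonpos), abs_of_nonpos hnonpos,
      abs_of_nonpos (by linarith)]
    ring
  · have hx' : x ∉ Ioi 0 := not_lt.2 hnonpos
    rw [indicator_of_mem (show x ∈ Ioc (-h) 0 from ⟨hgt, hnonpos⟩), indicator_of_notMem hx',
      indicator_of_mem (show x ∈ Iic 0 from hnonpos), abs_of_nonpos hnonpos,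
      abs_of_nonneg (by linarith)]
    ring

section

variable {μ : Measure ℝ} {h : ℝ}

theorem integral_abs_add_sub_abs [IsFiniteMeasure μ] (hh : 0 ≤ h) :
    ∫ x, (|h + x| - |x|) ∂μ
      = 2 * ∫ x in Ioc (-h) 0, (h + x) ∂μ + h * (μ.real (Ioi 0) - μ.real (Iic 0)) := by
  simp_rw [abs_add_sub_abs_eq_indicator hh]
  have hIoc : Integrable ((Ioc (-h) 0).indicator fun x => h + x) μ :=
    ((continuous_const.add continuous_id).integrableOn_Icc.mono_set Ioc_subset_Icc_self)
      |>.integrable_indicator measurableSet_Ioc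
  have hIoi := (integrable_const (μ := μ) h).indicator (measurableSet_Ioi (a := 0))
  have hIic := (integrable_const (μ := μ) h).indicator (measurableSet_Iic (a := 0))
  have hdiff : Integrable
      (fun x => (Ioi 0).indicator (fun _ => h) x - (Iic 0).indicator (fun _ => h) x) μ :=
    hIoi.sub hIic
  rw [integral_add (hIoc.const_mul 2) hdiff, integral_const_mul,
    integral_indicator measurableSet_Ioc, integral_sub hIoi hIic,
    integral_indicator_const _ measurableSet_Ioi, integral_indicator_const _ measurableSet_Iic,
    smul_eq_mul, smul_eq_mul]
  ring

lemma setIntegral_Ioc_const_add_nonneg : 0 ≤ ∫ x in Ioc (-h) 0, (h + x) ∂μ :=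
  setIntegral_nonneg measurableSet_Ioc fun x hx => by linarith [hx.1]

lemma setIntegral_Ioc_const_add_le [IsProbabilityMeasure μ] (hh : 0 ≤ h) :
    ∫ x in Ioc (-h) 0, (h + x) ∂μ ≤ h :=
  calc ∫ x in Ioc (-h) 0, (h + x) ∂μ
      ≤ h * μ.real (Ioc (-h) 0) := by
        refine (Real.le_norm_self _).trans (norm_setIntegral_le_of_norm_le_const
          (measure_lt_top μ _) fun x hx => ?_)
        rw [Real.norm_of_nonneg (by linarith [hx.1])]
        linarith [hx.2]
    _ ≤ h * 1 := mul_le_mul_of_nonneg_left measureReal_le_one hh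
    _ = h := mul_one h

end

/-- If `ε` has law `μ` with distribution function satisfying `G(0) = 1/2`
(i.e. `μ (Iic 0) = 1/2`) and `h > 0`, then
`E[|h + ε| − |ε|] = 2 ∫_{(-h,0]} (h + x) dG(x)`, and this expectation lies in
`[0, 2h]`. -/
theorem stmt_4 {Ω : Type*} [MeasurableSpace Ω] (P : Measure Ω) [IsProbabilityMeasure P]
    (ε : Ω → ℝ) (hε : Measurable ε) (h : ℝ) (hh : 0 < h)
    (hmed : P.map ε (Set.Iic 0) = ENNReal.ofReal (1 / 2)) :
    (∫ ω, (|h + ε ω| - |ε ω|) ∂P)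
        = 2 * ∫ x in Set.Ioc (-h) 0, (h + x) ∂(P.map ε) ∧
      0 ≤ ∫ ω, (|h + ε ω| - |ε ω|) ∂P ∧
      (∫ ω, (|h + ε ω| - |ε ω|) ∂P) ≤ 2 * h := by
  have : IsProbabilityMeasure (P.map ε) := Measure.isProbabilityMeasure_map hε.aemeasurable
  have hIic : (P.map ε).real (Iic 0) = 1 / 2 := by
    rw [measureReal_def, hmed, ENNReal.toReal_ofReal (by norm_num)]
  have hIoi : (P.map ε).real (Ioi 0) = 1 / 2 := by
    rw [← compl_Iic, probReal_compl_eq_one_sub measurableSet_Iic, hIic]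
    norm_num
  have hmean : ∫ ω, (|h + ε ω| - |ε ω|) ∂P = 2 * ∫ x in Ioc (-h) 0, (h + x) ∂(P.map ε) := by
    rw [← integral_map (f := fun x => |h + x| - |x|) hε.aemeasurable
      (by fun_prop : Continuous _).aestronglyMeasurable,
      integral_abs_add_sub_abs hh.le, hIoi, hIic, sub_self, mul_zero, add_zero]
  rw [hmean]
  exact ⟨rfl, by linarith [setIntegral_Ioc_const_add_nonneg (μ := P.map ε) (h := h)],
    by linarith [setIntegral_Ioc_const_add_le (μ := P.map ε) hh.le]⟩
end

section
/- Fix (A⁰, B⁰, λ⁰, μ⁰) and (A, B, λ, μ) with (λ⁰, μ⁰) ≠ (λ, μ), frequencies lying in (0,π)² and avoiding a countable exceptional set. Define h_{t,s} = A⁰cos(λ⁰t + μ⁰s) + B⁰sin(λ⁰t + μ⁰s) − A cos(λt + μs) − B sin(λt + μs). Then lim_{T,S→∞} (1/(TS)) Σ_{t=1}^{T} Σ_{s=1}^{S} h_{t,s}² = (A⁰² + B⁰² + A² + B²)/2, which is strictly positive when (A⁰,B⁰) ≠ (0,0) or (A,B) ≠ (0,0). -/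
/-!
Product-to-sum formulas write `h_{t,s}²` as the constant `(A⁰² + B⁰² + A² + B²)/2` plus a linear
combination of `cos` and `sin` of the linear phases `2λ⁰t + 2μ⁰s`, `2λt + 2μs` and
`(λ⁰ ± λ)t + (μ⁰ ± μ)s`. Since all frequencies lie in `(0, π)` and `(λ⁰, μ⁰) ≠ (λ, μ)`, each of
these phases `at + bs` has `e^{ia} ≠ 1` or `e^{ib} ≠ 1`. The grid average of `e^{i(at + bs)}`
factors into two averages of geometric progressions on the unit circle; both are bounded by `1`,
and the one with ratio `≠ 1` is `O(1/T)`. Hence every oscillating term averages out.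
-/

open Filter Real Topology Finset

section Means

variable {𝕜 : Type*}

noncomputable def cesaroMean [Field 𝕜] (f : ℕ → 𝕜) (T : ℕ) : 𝕜 :=
  1 / (T : 𝕜) * ∑ t ∈ Icc 1 T, f t

noncomputable def gridMean [Field 𝕜] (f : ℕ → ℕ → 𝕜) (TS : ℕ × ℕ) : 𝕜 :=
  1 / ((TS.1 : 𝕜) * (TS.2 : 𝕜)) * ∑ t ∈ Icc 1 TS.1, ∑ s ∈ Icc 1 TS.2, f t s

section Field

variable [Field 𝕜]

theorem gridMean_add (f g : ℕ → ℕ → 𝕜) (TS : ℕ × ℕ) :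
    gridMean (fun t s => f t s + g t s) TS = gridMean f TS + gridMean g TS := by
  simp only [gridMean, sum_add_distrib, mul_add]

theorem gridMean_const_mul (c : 𝕜) (f : ℕ → ℕ → 𝕜) (TS : ℕ × ℕ) :
    gridMean (fun t s => c * f t s) TS = c * gridMean f TS := by
  simp only [gridMean, ← mul_sum]
  ring

theorem gridMean_mul (f g : ℕ → 𝕜) :
    gridMean (fun t s => f t * g s) = fun TS => cesaroMean f TS.1 * cesaroMean g TS.2 := by
  ext TS
  simp only [gridMean, cesaroMean, ← sum_mul_sum]
  ring

theorem tendsto_gridMean_const [CharZero 𝕜] [TopologicalSpace 𝕜] (c : 𝕜) :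
    Tendsto (gridMean fun _ _ => c) (atTop ×ˢ atTop) (𝓝 c) := by
  refine tendsto_const_nhds.congr' ?_
  filter_upwards [(eventually_ge_atTop 1).prod_inl atTop,
    (eventually_ge_atTop 1).prod_inr atTop] with TS hT hS
  have hT : (TS.1 : 𝕜) ≠ 0 := by exact_mod_cast (by omega : TS.1 ≠ 0)
  have hS : (TS.2 : 𝕜) ≠ 0 := by exact_mod_cast (by omega : TS.2 ≠ 0)
  simp only [gridMean, sum_const, Nat.card_Icc, Nat.add_sub_cancel, nsmul_eq_mul]
  field_simp

end Field

theorem norm_sum_Icc_pow_le [NormedField 𝕜] {z : 𝕜} (hz : ‖z‖ ≤ 1) (h1 : z ≠ 1) (T : ℕ) :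
    ‖∑ t ∈ Icc 1 T, z ^ t‖ ≤ 2 / ‖z - 1‖ := by
  have hgeom : ∑ t ∈ Icc 1 T, z ^ t = z * ((z ^ T - 1) / (z - 1)) := by
    rw [← Ico_add_one_right_eq_Icc, sum_Ico_eq_sum_range]
    simp only [Nat.add_sub_cancel, pow_add, pow_one]
    rw [← mul_sum, geom_sum_eq h1]
  have hnum : ‖z ^ T - 1‖ ≤ 2 := by
    calc ‖z ^ T - 1‖ ≤ ‖z‖ ^ T + ‖(1 : 𝕜)‖ := by rw [← norm_pow]; exact norm_sub_le _ _
      _ ≤ 2 := by rw [norm_one]; linarith [pow_le_one₀ (n := T) (norm_nonneg z) hz]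
  rw [hgeom, norm_mul, norm_div]
  calc ‖z‖ * (‖z ^ T - 1‖ / ‖z - 1‖) ≤ 1 * (2 / ‖z - 1‖) := by gcongr
    _ = 2 / ‖z - 1‖ := one_mul _

variable [RCLike 𝕜]

theorem norm_cesaroMean_pow_le_one {z : 𝕜} (hz : ‖z‖ ≤ 1) (T : ℕ) :
    ‖cesaroMean (z ^ ·) T‖ ≤ 1 := by
  calc ‖cesaroMean (z ^ ·) T‖ ≤ 1 / T * ∑ t ∈ Icc 1 T, ‖z ^ t‖ := by
        rw [cesaroMean, norm_mul, norm_div, norm_one, RCLike.norm_natCast]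
        gcongr
        exact norm_sum_le _ _
    _ ≤ 1 / T * ∑ t ∈ Icc 1 T, 1 := by
        gcongr
        rw [norm_pow]
        exact pow_le_one₀ (norm_nonneg z) hz
    _ ≤ 1 := by
        rw [sum_const, Nat.card_Icc, Nat.add_sub_cancel, nsmul_one, one_div]
        exact inv_mul_le_one_of_le₀ le_rfl (Nat.cast_nonneg T)

theorem tendsto_cesaroMean_pow_zero {z : 𝕜} (hz : ‖z‖ ≤ 1) (h1 : z ≠ 1) :
    Tendsto (cesaroMean (z ^ ·)) atTop (𝓝 0) := by
  refine squeeze_zero_norm (fun T => ?_) (tendsto_const_div_atTop_nhds_zero_nat (2 / ‖z - 1‖))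
  rw [cesaroMean, norm_mul, norm_div, norm_one, RCLike.norm_natCast, one_div_mul_eq_div]
  gcongr
  exact norm_sum_Icc_pow_le hz h1 T

end Means

section Oscillation

theorem exp_ofReal_mul_I_ne_one {θ : ℝ} (h0 : θ ≠ 0) (h1 : -(2 * π) < θ) (h2 : θ < 2 * π) :
    Complex.exp (θ * Complex.I) ≠ 1 := fun h =>
  h0 <| (cos_eq_one_iff_of_lt_of_lt h1 h2).1 <| by
    rw [← Complex.exp_ofReal_mul_I_re, h, Complex.one_re]

theorem exp_linear_phase (a b : ℝ) (t s : ℕ) :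
    Complex.exp (↑(a * t + b * s) * Complex.I) =
      Complex.exp (a * Complex.I) ^ t * Complex.exp (b * Complex.I) ^ s := by
  rw [← Complex.exp_nat_mul, ← Complex.exp_nat_mul, ← Complex.exp_add]
  push_cast
  ring_nf

variable {a b : ℝ}

theorem tendsto_gridMean_exp_zero
    (h : Complex.exp (a * Complex.I) ≠ 1 ∨ Complex.exp (b * Complex.I) ≠ 1) :
    Tendsto (gridMean fun t s : ℕ => Complex.exp (↑(a * t + b * s) * Complex.I))
      (atTop ×ˢ atTop) (𝓝 0) := by
  have hbdd : ∀ {u : ℂ}, ‖u‖ ≤ 1 → ∀ p : ℕ × ℕ → ℕ,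
      IsBoundedUnder (· ≤ ·) (atTop ×ˢ atTop) (fun TS => ‖cesaroMean (u ^ ·) (p TS)‖) :=
    fun hu _ => isBoundedUnder_of ⟨1, fun _ => norm_cesaroMean_pow_le_one hu _⟩
  have hz := (Complex.norm_exp_ofReal_mul_I a).le
  have hw := (Complex.norm_exp_ofReal_mul_I b).le
  simp only [exp_linear_phase, gridMean_mul]
  rcases h with hz1 | hw1
  · exact ((tendsto_cesaroMean_pow_zero hz hz1).comp tendsto_fst).zero_mul_isBoundedUnder_le
      (hbdd hw Prod.snd)
  · exact isBoundedUnder_le_mul_tendsto_zero (hbdd hz Prod.fst)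
      ((tendsto_cesaroMean_pow_zero hw hw1).comp tendsto_snd)

theorem re_gridMean (f : ℕ → ℕ → ℂ) :
    (fun TS => (gridMean f TS).re) = gridMean fun t s => (f t s).re := by
  ext TS
  simp [gridMean, Complex.re_sum, ← Complex.ofReal_natCast, ← Complex.ofReal_mul]

theorem im_gridMean (f : ℕ → ℕ → ℂ) :
    (fun TS => (gridMean f TS).im) = gridMean fun t s => (f t s).im := by
  ext TS
  simp [gridMean, Complex.im_sum, ← Complex.ofReal_natCast, ← Complex.ofReal_mul]

theorem tendsto_gridMean_cos_zero
    (h : Complex.exp (a * Complex.I) ≠ 1 ∨ Complex.exp (b * Complex.I) ≠ 1) :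
    Tendsto (gridMean fun t s : ℕ => cos (a * t + b * s)) (atTop ×ˢ atTop) (𝓝 0) := by
  simpa only [Function.comp_def, re_gridMean, Complex.exp_ofReal_mul_I_re, Complex.zero_re]
    using (Complex.continuous_re.tendsto 0).comp (tendsto_gridMean_exp_zero h)

theorem tendsto_gridMean_sin_zero
    (h : Complex.exp (a * Complex.I) ≠ 1 ∨ Complex.exp (b * Complex.I) ≠ 1) :
    Tendsto (gridMean fun t s : ℕ => sin (a * t + b * s)) (atTop ×ˢ atTop) (𝓝 0) := by
  simpa only [Function.comp_def, im_gridMean, Complex.exp_ofReal_mul_I_im, Complex.zero_im]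
    using (Complex.continuous_im.tendsto 0).comp (tendsto_gridMean_exp_zero h)

end Oscillation

theorem sq_sinusoid_sub_sinusoid (A₀ B₀ A B x y : ℝ) :
    (A₀ * cos x + B₀ * sin x - A * cos y - B * sin y) ^ 2 =
      (A₀ ^ 2 + B₀ ^ 2 + A ^ 2 + B ^ 2) / 2
        + (A₀ ^ 2 - B₀ ^ 2) / 2 * cos (2 * x) + A₀ * B₀ * sin (2 * x)
        + (A ^ 2 - B ^ 2) / 2 * cos (2 * y) + A * B * sin (2 * y)
        + (B₀ * B - A₀ * A) * cos (x + y) + (-(A₀ * B) - B₀ * A) * sin (x + y)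
        + (-(A₀ * A) - B₀ * B) * cos (x - y) + (A₀ * B - B₀ * A) * sin (x - y) := by
  simp only [cos_two_mul, sin_two_mul, cos_add, cos_sub, sin_add, sin_sub]
  linear_combination B₀ ^ 2 * sin_sq_add_cos_sq x + B ^ 2 * sin_sq_add_cos_sq y

theorem tendsto_gridMean_sq_sinusoid_sub_sinusoid (A₀ B₀ A B : ℝ) {lam₀ mu₀ l m : ℝ}
    (h₀ : Complex.exp (↑(2 * lam₀) * Complex.I) ≠ 1 ∨ Complex.exp (↑(2 * mu₀) * Complex.I) ≠ 1)
    (h₁ : Complex.exp (↑(2 * l) * Complex.I) ≠ 1 ∨ Complex.exp (↑(2 * m) * Complex.I) ≠ 1)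
    (hadd : Complex.exp (↑(lam₀ + l) * Complex.I) ≠ 1 ∨
      Complex.exp (↑(mu₀ + m) * Complex.I) ≠ 1)
    (hsub : Complex.exp (↑(lam₀ - l) * Complex.I) ≠ 1 ∨
      Complex.exp (↑(mu₀ - m) * Complex.I) ≠ 1) :
    Tendsto (gridMean fun t s : ℕ =>
        (A₀ * cos (lam₀ * t + mu₀ * s) + B₀ * sin (lam₀ * t + mu₀ * s)
          - A * cos (l * t + m * s) - B * sin (l * t + m * s)) ^ 2)
      (atTop ×ˢ atTop) (𝓝 ((A₀ ^ 2 + B₀ ^ 2 + A ^ 2 + B ^ 2) / 2)) := by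
  have hscale : ∀ c a b : ℝ, ∀ t s : ℕ, c * (a * t + b * s) = c * a * t + c * b * s :=
    fun _ _ _ _ _ => by ring
  have hsum : ∀ a b c d : ℝ, ∀ t s : ℕ,
      a * t + b * s + (c * t + d * s) = (a + c) * t + (b + d) * s :=
    fun _ _ _ _ _ _ => by ring
  have hdiff : ∀ a b c d : ℝ, ∀ t s : ℕ,
      a * t + b * s - (c * t + d * s) = (a - c) * t + (b - d) * s :=
    fun _ _ _ _ _ _ => by ring
  have hlim := ((((((((tendsto_gridMean_const ((A₀ ^ 2 + B₀ ^ 2 + A ^ 2 + B ^ 2) / 2)).add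
    ((tendsto_gridMean_cos_zero h₀).const_mul ((A₀ ^ 2 - B₀ ^ 2) / 2))).add
    ((tendsto_gridMean_sin_zero h₀).const_mul (A₀ * B₀))).add
    ((tendsto_gridMean_cos_zero h₁).const_mul ((A ^ 2 - B ^ 2) / 2))).add
    ((tendsto_gridMean_sin_zero h₁).const_mul (A * B))).add
    ((tendsto_gridMean_cos_zero hadd).const_mul (B₀ * B - A₀ * A))).add
    ((tendsto_gridMean_sin_zero hadd).const_mul (-(A₀ * B) - B₀ * A))).add
    ((tendsto_gridMean_cos_zero hsub).const_mul (-(A₀ * A) - B₀ * B))).add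
    ((tendsto_gridMean_sin_zero hsub).const_mul (A₀ * B - B₀ * A))
  convert hlim using 1
  · ext TS
    simp only [sq_sinusoid_sub_sinusoid, hscale, hsum, hdiff, gridMean_add, gridMean_const_mul]
  · simp

theorem sq_add_sq_pos_of_ne_zero {a b : ℝ} (h : (a, b) ≠ (0, 0)) : 0 < a ^ 2 + b ^ 2 := by
  have hab : a ≠ 0 ∨ b ≠ 0 := by
    contrapose! h
    rw [h.1, h.2]
  rcases hab with ha | hb <;> positivity

/-- For all but countably many pairs of distinct frequency pairs in `(0,π)²`,
the grid average of `h_{t,s}²` converges to `(A⁰² + B⁰² + A² + B²)/2`, which is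
positive as soon as one of the amplitude pairs is nonzero. -/
theorem stmt_6 :
    ∃ C : Set ((ℝ × ℝ) × (ℝ × ℝ)), C.Countable ∧
      ∀ A₀ B₀ A B lam₀ mu₀ l m : ℝ,
        lam₀ ∈ Set.Ioo 0 π → mu₀ ∈ Set.Ioo 0 π → l ∈ Set.Ioo 0 π → m ∈ Set.Ioo 0 π →
        (lam₀, mu₀) ≠ (l, m) → ((lam₀, mu₀), (l, m)) ∉ C →
          Tendsto
            (fun TS : ℕ × ℕ =>
              (1 / ((TS.1 : ℝ) * (TS.2 : ℝ))) *
                ∑ t ∈ Finset.Icc 1 TS.1, ∑ s ∈ Finset.Icc 1 TS.2,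
                  (A₀ * Real.cos (lam₀ * t + mu₀ * s) + B₀ * Real.sin (lam₀ * t + mu₀ * s)
                    - A * Real.cos (l * t + m * s) - B * Real.sin (l * t + m * s)) ^ 2)
            (atTop ×ˢ atTop)
            (𝓝 ((A₀ ^ 2 + B₀ ^ 2 + A ^ 2 + B ^ 2) / 2)) ∧
          (((A₀, B₀) ≠ ((0 : ℝ), (0 : ℝ)) ∨ (A, B) ≠ ((0 : ℝ), (0 : ℝ))) →
            0 < (A₀ ^ 2 + B₀ ^ 2 + A ^ 2 + B ^ 2) / 2) := by
  refine ⟨∅, Set.countable_empty, ?_⟩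
  rintro A₀ B₀ A B lam₀ mu₀ l m ⟨hlam₀, hlam₀'⟩ ⟨hmu₀, hmu₀'⟩ ⟨hl, hl'⟩ ⟨hm, hm'⟩ hne -
  have hπ := pi_pos
  refine ⟨tendsto_gridMean_sq_sinusoid_sub_sinusoid A₀ B₀ A B
    (.inl ?_) (.inl ?_) (.inl ?_) ?_, ?_⟩
  · exact exp_ofReal_mul_I_ne_one (by positivity) (by linarith) (by linarith)
  · exact exp_ofReal_mul_I_ne_one (by positivity) (by linarith) (by linarith)
  · exact exp_ofReal_mul_I_ne_one (by positivity) (by linarith) (by linarith)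
  · by_cases hlam : lam₀ = l
    · have hmu : mu₀ ≠ m := fun hmu => hne (by rw [hlam, hmu])
      exact .inr (exp_ofReal_mul_I_ne_one (sub_ne_zero.2 hmu) (by linarith) (by linarith))
    · exact .inl (exp_ofReal_mul_I_ne_one (sub_ne_zero.2 hlam) (by linarith) (by linarith))
  · rintro (h | h)
    · linarith [sq_add_sq_pos_of_ne_zero h, sq_nonneg A, sq_nonneg B]
    · linarith [sq_add_sq_pos_of_ne_zero h, sq_nonneg A₀, sq_nonneg B₀]
end

section
/- The 4×4 symmetric matrix Σ with rows (1/2, 0, B/4, B/4), (0, 1/2, −A/4, −A/4), (B/4, −A/4, (A²+B²)/6, (A²+B²)/8), (B/4, −A/4, (A²+B²)/8, (A²+B²)/6) is positive definite whenever (A, B) ≠ (0, 0). -/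
/-!
Completing the square in the first two coordinates, the quadratic form of `Σ` at `x` is
`(x₀ + B(x₂+x₃)/2)²/2 + (x₁ - A(x₂+x₃)/2)²/2 + (A²+B²)(x₂²+x₃²)/24`;
equivalently, the Schur complement of the block `I/2` is `(A²+B²)/24 • I`.
Each term is nonnegative, the last one is positive unless `x₂ = x₃ = 0`, and then the first two
reduce to `x₀²/2 + x₁²/2`.
-/

open Matrix

noncomputable def ladInfoMatrix (A B : ℝ) : Matrix (Fin 4) (Fin 4) ℝ :=
  !![1 / 2, 0, B / 4, B / 4;
     0, 1 / 2, -A / 4, -A / 4;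
     B / 4, -A / 4, (A ^ 2 + B ^ 2) / 6, (A ^ 2 + B ^ 2) / 8;
     B / 4, -A / 4, (A ^ 2 + B ^ 2) / 8, (A ^ 2 + B ^ 2) / 6]

lemma ladInfoMatrix_isHermitian (A B : ℝ) : (ladInfoMatrix A B).IsHermitian := by
  ext i j
  fin_cases i <;> fin_cases j <;> simp [ladInfoMatrix]

lemma dotProduct_ladInfoMatrix_mulVec (A B : ℝ) (x : Fin 4 → ℝ) :
    x ⬝ᵥ (ladInfoMatrix A B *ᵥ x) =
      (x 0 + B * (x 2 + x 3) / 2) ^ 2 / 2 + (x 1 - A * (x 2 + x 3) / 2) ^ 2 / 2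
        + (A ^ 2 + B ^ 2) * (x 2 ^ 2 + x 3 ^ 2) / 24 := by
  simp only [ladInfoMatrix, dotProduct, mulVec, Fin.sum_univ_four, of_apply, cons_val',
    cons_val_fin_one, cons_val_zero, cons_val_one, cons_val]
  ring

lemma sq_add_sq_pos_of_ne_zero_or {R : Type*} [CommRing R] [LinearOrder R] [IsStrictOrderedRing R]
    {a b : R} (h : a ≠ 0 ∨ b ≠ 0) : 0 < a ^ 2 + b ^ 2 := by
  rcases h with h | h
  · exact add_pos_of_pos_of_nonneg (sq_pos_of_ne_zero h) (sq_nonneg b)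
  · exact add_pos_of_nonneg_of_pos (sq_nonneg a) (sq_pos_of_ne_zero h)

theorem ladInfoMatrix_posDef {A B : ℝ} (hAB : 0 < A ^ 2 + B ^ 2) :
    (ladInfoMatrix A B).PosDef := by
  refine posDef_iff_dotProduct_mulVec.2 ⟨ladInfoMatrix_isHermitian A B, fun x hx => ?_⟩
  rw [star_trivial, dotProduct_ladInfoMatrix_mulVec]
  by_cases hcd : x 2 = 0 ∧ x 3 = 0
  · obtain ⟨h2, h3⟩ := hcd
    have hab : x 0 ≠ 0 ∨ x 1 ≠ 0 := by
      by_contra! h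
      exact hx (by ext i; fin_cases i <;> simp [h.1, h.2, h2, h3])
    simp only [h2, h3, add_zero, mul_zero, zero_div, sub_zero, zero_pow two_ne_zero]
    linarith [sq_add_sq_pos_of_ne_zero_or hab]
  · have hlast := mul_pos hAB (sq_add_sq_pos_of_ne_zero_or (not_and_or.mp hcd))
    linarith [sq_nonneg (x 0 + B * (x 2 + x 3) / 2), sq_nonneg (x 1 - A * (x 2 + x 3) / 2)]

/-- The asymptotic information-type matrix `Σ` of the LAD estimators of a
one-component 2-D sinusoidal model is positive definite whenever the amplitude
pair `(A, B)` is nonzero. -/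
theorem stmt_18 (A B : ℝ) (hAB : (A, B) ≠ ((0 : ℝ), (0 : ℝ))) :
    (!![1 / 2, 0, B / 4, B / 4;
        0, 1 / 2, -A / 4, -A / 4;
        B / 4, -A / 4, (A ^ 2 + B ^ 2) / 6, (A ^ 2 + B ^ 2) / 8;
        B / 4, -A / 4, (A ^ 2 + B ^ 2) / 8, (A ^ 2 + B ^ 2) / 6] : Matrix (Fin 4) (Fin 4) ℝ).PosDef :=
  ladInfoMatrix_posDef <| sq_add_sq_pos_of_ne_zero_or <| by
    rwa [Ne, Prod.mk.injEq, not_and_or] at hAB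
end
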